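/- Let C = (y_{i_1}, y_{i_2}, …, y_{i_m}) be a cycle in P̂ that belongs to a facet of Q_P. Then either C is a very special cycle, or C contains a special path (y_{i_1}, y_{i_2}, …, y_{i_{r+1}}) with y_{i_1} = y_0 and y_{i_{r+1}} = y_{d+1} (after relabeling the cyclic starting point so that y_{i_1} = y_0). -/

import Mathlib

open scoped Classical

/-- The poset `P̂ = P ∪ {0̂, 1̂}`: `none` is the minimum `y₀ = 0̂`,
`some none` is the maximum `y_{d+1} = 1̂`, and `some (some i)` is `y_{i+1} ∈ P`. -/
abbrev HatP (d : ℕ) := Option (Option (Fin d))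

def hatBot (d : ℕ) : HatP d := none

def hatTop (d : ℕ) : HatP d := some none

/-- The order of `P̂` induced by a partial order `P` on `Fin d`. -/
def hatLE {d : ℕ} (P : PartialOrder (Fin d)) : HatP d → HatP d → Prop
  | none, _ => True
  | some _, none => False
  | some none, some none => True
  | some none, some (some _) => False
  | some (some _), some none => True
  | some (some a), some (some b) => P.le a b

def hatLT {d : ℕ} (P : PartialOrder (Fin d)) (a b : HatP d) : Prop :=
  hatLE P a b ∧ a ≠ b

/-- `b` covers `a` in `P̂`. -/
def IsCover {d : ℕ} (P : PartialOrder (Fin d)) (a b : HatP d) : Prop :=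
  hatLT P a b ∧ ∀ z, ¬ (hatLT P a z ∧ hatLT P z b)

/-- `{a, b}` is an edge of the Hasse diagram of `P̂` (undirected). -/
def IsEdge {d : ℕ} (P : PartialOrder (Fin d)) (a b : HatP d) : Prop :=
  IsCover P a b ∨ IsCover P b a

/-- `chi y = e_i` if `y = y_i ∈ P`, and `0` if `y ∈ {0̂, 1̂}`. -/
def chi {d : ℕ} : HatP d → (Fin d → ℝ)
  | some (some i) => fun k => if k = i then 1 else 0
  | _ => 0

/-- `ρ(e)` for the edge `e = {a, b}` with `a < b`. -/
def rho {d : ℕ} (a b : HatP d) : Fin d → ℝ := chi a - chi b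

/-- `ρ(e)` for an unordered edge `{a, b}`. -/
noncomputable def rhoE {d : ℕ} (P : PartialOrder (Fin d)) (a b : HatP d) : Fin d → ℝ :=
  if hatLT P a b then rho a b else rho b a

/-- The set `{ρ(e) : e an edge of P̂}`. -/
def edgeVecs {d : ℕ} (P : PartialOrder (Fin d)) : Set (Fin d → ℝ) :=
  {v | ∃ a b, IsCover P a b ∧ v = rho a b}

/-- The polytope `Q_P`, convex hull of `{ρ(e) : e an edge of P̂}`. -/
def QPoly {d : ℕ} (P : PartialOrder (Fin d)) : Set (Fin d → ℝ) :=
  convexHull ℝ (edgeVecs P)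

/-- A point of `ℝ^d` all of whose coordinates are integers. -/
def IsIntegralPt {d : ℕ} (x : Fin d → ℝ) : Prop := ∀ k, ∃ z : ℤ, x k = (z : ℝ)

/-- A facet of a polytope: an exposed face of dimension `d - 1`. -/
def IsFacet {d : ℕ} (Q F : Set (Fin d → ℝ)) : Prop :=
  IsExposed ℝ Q F ∧ Module.finrank ℝ ↥(vectorSpan ℝ F) = d - 1

/-- A cycle `(c 0, c 1, …, c m)` in (the Hasse diagram of) `P̂`;
indices are cyclic in `Fin (m+1)`. -/
def IsCycle {d : ℕ} (P : PartialOrder (Fin d)) {m : ℕ} (c : Fin (m + 1) → HatP d) : Prop :=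
  2 ≤ m ∧ Function.Injective c ∧ ∀ j, IsEdge P (c j) (c (j + 1))

/-- A cycle is special if it has as many ascending steps as descending steps. -/
def CycleSpecial {d : ℕ} (P : PartialOrder (Fin d)) {m : ℕ} (c : Fin (m + 1) → HatP d) : Prop :=
  Nat.card {j : Fin (m + 1) // hatLT P (c j) (c (j + 1))} =
    Nat.card {j : Fin (m + 1) // hatLT P (c (j + 1)) (c j)}

/-- A very special cycle: special, and not containing both `0̂` and `1̂`. -/
def VerySpecialCycle {d : ℕ} (P : PartialOrder (Fin d)) {m : ℕ}
    (c : Fin (m + 1) → HatP d) : Prop :=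
  IsCycle P c ∧ CycleSpecial P c ∧
    ¬ (hatBot d ∈ Set.range c ∧ hatTop d ∈ Set.range c)

/-- A path `(c 0, c 1, …, c m)` in (the Hasse diagram of) `P̂`. -/
def IsPath {d : ℕ} (P : PartialOrder (Fin d)) {m : ℕ} (c : Fin (m + 1) → HatP d) : Prop :=
  Function.Injective c ∧ ∀ j : Fin m, IsEdge P (c j.castSucc) (c j.succ)

/-- A path is special if it has as many ascending steps as descending steps. -/
def PathSpecial {d : ℕ} (P : PartialOrder (Fin d)) {m : ℕ} (c : Fin (m + 1) → HatP d) : Prop :=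
  Nat.card {j : Fin m // hatLT P (c j.castSucc) (c j.succ)} =
    Nat.card {j : Fin m // hatLT P (c j.succ) (c j.castSucc)}

/-- `μ` is the level function of a special cycle `c`. -/
def IsMuCycle {d : ℕ} (P : PartialOrder (Fin d)) {m : ℕ} (c : Fin (m + 1) → HatP d)
    (μ : Fin (m + 1) → ℕ) : Prop :=
  (∀ j, (hatLT P (c j) (c (j + 1)) → μ (j + 1) = μ j + 1) ∧
        (hatLT P (c (j + 1)) (c j) → μ j = μ (j + 1) + 1)) ∧
  ∃ j, μ j = 0

/-- `μ` is the level function of a special path `c`. -/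
def IsMuPath {d : ℕ} (P : PartialOrder (Fin d)) {m : ℕ} (c : Fin (m + 1) → HatP d)
    (μ : Fin (m + 1) → ℕ) : Prop :=
  (∀ j : Fin m, (hatLT P (c j.castSucc) (c j.succ) → μ j.succ = μ j.castSucc + 1) ∧
        (hatLT P (c j.succ) (c j.castSucc) → μ j.castSucc = μ j.succ + 1)) ∧
  ∃ j, μ j = 0

/-- The distance `dist_{P̂}(y, z)`: the smallest `s` for which there is a saturated
chain `y = z_0 < z_1 < ⋯ < z_s = z` in `P̂`. -/
noncomputable def hatDist {d : ℕ} (P : PartialOrder (Fin d)) (y z : HatP d) : ℕ :=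
  sInf {s | ∃ c : Fin (s + 1) → HatP d, c 0 = y ∧ c (Fin.last s) = z ∧
    ∀ j : Fin s, IsCover P (c j.castSucc) (c j.succ)}

/-- `P̂` has a very special cycle satisfying the inequalities (1) and (2). -/
def HasBadCycle {d : ℕ} (P : PartialOrder (Fin d)) : Prop :=
  ∃ (m : ℕ) (c : Fin (m + 1) → HatP d) (μ : Fin (m + 1) → ℕ),
    VerySpecialCycle P c ∧ IsMuCycle P c μ ∧
    (∀ a b, hatLT P (c b) (c a) →
      (μ a : ℤ) - (μ b : ℤ) ≤ (hatDist P (c b) (c a) : ℤ)) ∧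
    (∀ a b, (μ a : ℤ) - (μ b : ℤ) ≤
      (hatDist P (hatBot d) (c a) : ℤ) + (hatDist P (c b) (hatTop d) : ℤ))

/-- `P̂` has a special path from `0̂` to `1̂` satisfying the inequality (3). -/
def HasBadPath {d : ℕ} (P : PartialOrder (Fin d)) : Prop :=
  ∃ (m : ℕ) (c : Fin (m + 1) → HatP d) (μ : Fin (m + 1) → ℕ),
    IsPath P c ∧ PathSpecial P c ∧ c 0 = hatBot d ∧ c (Fin.last m) = hatTop d ∧
    IsMuPath P c μ ∧
    (∀ a b, hatLT P (c b) (c a) →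
      (μ a : ℤ) - (μ b : ℤ) ≤ (hatDist P (c b) (c a) : ℤ))

/-- A polytope is simplicial (ℚ-factorial) if each of its proper faces is a simplex. -/
def SimplicialPoly {d : ℕ} (Q : Set (Fin d → ℝ)) : Prop :=
  ∀ F : Set (Fin d → ℝ), IsExposed ℝ Q F → F ≠ Q →
    AffineIndependent ℝ (fun p : Set.extremePoints ℝ F => (p : Fin d → ℝ))

/-- A polytope is smooth if the vertices of each facet form a ℤ-basis of `ℤ^d`. -/
def SmoothPoly {d : ℕ} (Q : Set (Fin d → ℝ)) : Prop :=
  ∀ F : Set (Fin d → ℝ), IsFacet Q F →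
    ∃ b : Module.Basis (Fin d) ℤ (Fin d → ℤ),
      (Set.range fun i => fun k => ((b i k : ℤ) : ℝ)) = Set.extremePoints ℝ F

/-- A maximal chain `0̂ = c 0 < c 1 < ⋯ < c m = 1̂` of `P̂` (of length `m`). -/
def IsMaxChainHat {d : ℕ} (P : PartialOrder (Fin d)) {m : ℕ} (c : Fin (m + 1) → HatP d) : Prop :=
  c 0 = hatBot d ∧ c (Fin.last m) = hatTop d ∧
    ∀ j : Fin m, IsCover P (c j.castSucc) (c j.succ)

/-- `P` is pure: all maximal chains of `P̂` have the same length. -/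
def PureP {d : ℕ} (P : PartialOrder (Fin d)) : Prop :=
  ∀ (m m' : ℕ) (c : Fin (m + 1) → HatP d) (c' : Fin (m' + 1) → HatP d),
    IsMaxChainHat P c → IsMaxChainHat P c' → m = m'
section Helpers

variable {d : ℕ} (P : PartialOrder (Fin d))

lemma hatLE_refl : ∀ a : HatP d, hatLE P a a
  | none => trivial
  | some none => trivial
  | some (some a) => P.le_refl a

lemma hatLE_trans : ∀ a b e : HatP d, hatLE P a b → hatLE P b e → hatLE P a e
  | none, _, _, _, _ => trivial
  | some none, none, _, h, _ => False.elim h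
  | some (some _), none, _, h, _ => False.elim h
  | some none, some none, none, _, h => False.elim h
  | some none, some none, some none, _, _ => trivial
  | some none, some none, some (some _), _, h => False.elim h
  | some none, some (some _), _, h, _ => False.elim h
  | some (some _), some none, none, _, h => False.elim h
  | some (some _), some none, some none, _, _ => trivial
  | some (some _), some none, some (some _), _, h => False.elim h
  | some (some _), some (some _), none, _, h => False.elim h
  | some (some _), some (some _), some none, _, _ => trivial
  | some (some a), some (some b), some (some e), h1, h2 => P.le_trans a b e h1 h2

lemma hatLE_antisymm : ∀ a b : HatP d, hatLE P a b → hatLE P b a → a = b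
  | none, none, _, _ => rfl
  | none, some none, _, h => False.elim h
  | none, some (some _), _, h => False.elim h
  | some none, none, h, _ => False.elim h
  | some (some _), none, h, _ => False.elim h
  | some none, some none, _, _ => rfl
  | some none, some (some _), h, _ => False.elim h
  | some (some _), some none, _, h => False.elim h
  | some (some a), some (some b), h1, h2 => by rw [P.le_antisymm a b h1 h2]

lemma hatLE_top : ∀ a : HatP d, hatLE P a (hatTop d)
  | none => trivial
  | some none => trivial
  | some (some _) => trivial

lemma hatLE_bot (a : HatP d) : hatLE P (hatBot d) a := trivial

lemma hatLT_asymm {a b : HatP d} (h1 : hatLT P a b) (h2 : hatLT P b a) : False :=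
  h1.2 (hatLE_antisymm P a b h1.1 h2.1)

lemma hatLT_irrefl {a : HatP d} (h : hatLT P a a) : False := h.2 rfl

lemma hatLT_trans {a b e : HatP d} (h1 : hatLT P a b) (h2 : hatLT P b e) : hatLT P a e :=
  ⟨hatLE_trans P a b e h1.1 h2.1, fun hae => hatLT_asymm P h2 (hae ▸ h1)⟩

lemma hatLE_of_hatLT {a b : HatP d} (h : hatLT P a b) : hatLE P a b := h.1

lemma edge_dichotomy {a b : HatP d} (h : IsEdge P a b) : hatLT P a b ∨ hatLT P b a :=
  h.elim (fun h => Or.inl h.1) (fun h => Or.inr h.1)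

lemma chi_bot : chi (hatBot d) = 0 := rfl

lemma chi_top : chi (hatTop d) = 0 := rfl

lemma exists_cover_above' : ∀ (n : ℕ) (a z : HatP d),
    Set.ncard {w : HatP d | hatLT P a w ∧ hatLT P w z} ≤ n → hatLT P a z →
    ∃ z', IsCover P a z' ∧ hatLE P z' z := by
  intro n
  induction n with
  | zero =>
    intro a z hcard hlt
    refine ⟨z, ⟨hlt, fun w hw => ?_⟩, hatLE_refl P z⟩
    have hne : {w : HatP d | hatLT P a w ∧ hatLT P w z}.Nonempty := ⟨w, hw⟩
    have := (Set.ncard_pos (Set.toFinite _)).2 hne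
    omega
  | succ n ih =>
    intro a z hcard hlt
    by_cases hemp : {w : HatP d | hatLT P a w ∧ hatLT P w z} = ∅
    · refine ⟨z, ⟨hlt, fun w hw => ?_⟩, hatLE_refl P z⟩
      have : w ∈ {w : HatP d | hatLT P a w ∧ hatLT P w z} := hw
      rw [hemp] at this
      exact this
    · obtain ⟨w, hw⟩ := Set.nonempty_iff_ne_empty.2 hemp
      have hss : {v : HatP d | hatLT P a v ∧ hatLT P v w}
          ⊂ {v : HatP d | hatLT P a v ∧ hatLT P v z} := by
        constructor
        · rintro v ⟨h1, h2⟩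
          exact ⟨h1, hatLT_trans P h2 hw.2⟩
        · intro hsub
          have := hsub hw
          exact hatLT_irrefl P this.2
      have hlt' := Set.ncard_lt_ncard hss (Set.toFinite _)
      obtain ⟨z', hcov, hle⟩ := ih a w (by omega) hw.1
      exact ⟨z', hcov, hatLE_trans P _ _ _ hle hw.2.1⟩

lemma exists_cover_below' : ∀ (n : ℕ) (a z : HatP d),
    Set.ncard {w : HatP d | hatLT P z w ∧ hatLT P w a} ≤ n → hatLT P z a →
    ∃ z', IsCover P z' a ∧ hatLE P z z' := by
  intro n
  induction n with
  | zero =>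
    intro a z hcard hlt
    refine ⟨z, ⟨hlt, fun w hw => ?_⟩, hatLE_refl P z⟩
    have hne : {w : HatP d | hatLT P z w ∧ hatLT P w a}.Nonempty := ⟨w, hw⟩
    have := (Set.ncard_pos (Set.toFinite _)).2 hne
    omega
  | succ n ih =>
    intro a z hcard hlt
    by_cases hemp : {w : HatP d | hatLT P z w ∧ hatLT P w a} = ∅
    · refine ⟨z, ⟨hlt, fun w hw => ?_⟩, hatLE_refl P z⟩
      have : w ∈ {w : HatP d | hatLT P z w ∧ hatLT P w a} := hw
      rw [hemp] at this
      exact this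
    · obtain ⟨w, hw⟩ := Set.nonempty_iff_ne_empty.2 hemp
      have hss : {v : HatP d | hatLT P w v ∧ hatLT P v a}
          ⊂ {v : HatP d | hatLT P z v ∧ hatLT P v a} := by
        constructor
        · rintro v ⟨h1, h2⟩
          exact ⟨hatLT_trans P hw.1 h1, h2⟩
        · intro hsub
          have := hsub hw
          exact hatLT_irrefl P this.1
      have hlt' := Set.ncard_lt_ncard hss (Set.toFinite _)
      obtain ⟨z', hcov, hle⟩ := ih a w (by omega) hw.2
      exact ⟨z', hcov, hatLE_trans P _ _ _ (hatLE_of_hatLT P hw.1) hle⟩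

lemma up_sum : ∀ (n : ℕ) (a : HatP d), Set.ncard {w : HatP d | hatLT P a w} ≤ n →
    ∃ (k : ℕ) (g : Fin k → (Fin d → ℝ)), (∀ j, g j ∈ edgeVecs P) ∧
      (∑ j, g j) = chi a ∧ (a ≠ hatTop d → 0 < k) := by
  intro n
  induction n with
  | zero =>
    intro a hcard
    have ha : a = hatTop d := by
      by_contra ha
      have hne : {w : HatP d | hatLT P a w}.Nonempty := ⟨hatTop d, hatLE_top P a, ha⟩
      have := (Set.ncard_pos (Set.toFinite _)).2 hne
      omega
    exact ⟨0, Fin.elim0, fun j => j.elim0, by simp [ha, chi_top], fun h => absurd ha h⟩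
  | succ n ih =>
    intro a hcard
    by_cases ha : a = hatTop d
    · exact ⟨0, Fin.elim0, fun j => j.elim0, by simp [ha, chi_top], fun h => absurd ha h⟩
    · obtain ⟨z, hcov, -⟩ := exists_cover_above' P _ a (hatTop d) le_rfl ⟨hatLE_top P a, ha⟩
      have hss : {w : HatP d | hatLT P z w} ⊂ {w : HatP d | hatLT P a w} := by
        constructor
        · intro v hv
          exact hatLT_trans P hcov.1 hv
        · intro hsub
          exact hatLT_irrefl P (hsub hcov.1)
      have hlt' := Set.ncard_lt_ncard hss (Set.toFinite _)
      obtain ⟨k, g, hg, hsum, -⟩ := ih z (by omega)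
      refine ⟨k + 1, Fin.cons (rho a z) g, ?_, ?_, fun _ => Nat.succ_pos k⟩
      · intro j
        refine Fin.cases ?_ ?_ j
        · rw [Fin.cons_zero]
          exact ⟨a, z, hcov, rfl⟩
        · intro i
          rw [Fin.cons_succ]
          exact hg i
      · rw [Fin.sum_cons, hsum]
        show chi a - chi z + chi z = chi a
        abel

lemma down_sum : ∀ (n : ℕ) (a : HatP d), Set.ncard {w : HatP d | hatLT P w a} ≤ n →
    ∃ (k : ℕ) (g : Fin k → (Fin d → ℝ)), (∀ j, g j ∈ edgeVecs P) ∧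
      (∑ j, g j) = -chi a ∧ (a ≠ hatBot d → 0 < k) := by
  intro n
  induction n with
  | zero =>
    intro a hcard
    have ha : a = hatBot d := by
      by_contra ha
      have hne : {w : HatP d | hatLT P w a}.Nonempty :=
        ⟨hatBot d, hatLE_bot P a, fun h => ha h.symm⟩
      have := (Set.ncard_pos (Set.toFinite _)).2 hne
      omega
    exact ⟨0, Fin.elim0, fun j => j.elim0, by simp [ha, chi_bot], fun h => absurd ha h⟩
  | succ n ih =>
    intro a hcard
    by_cases ha : a = hatBot d
    · exact ⟨0, Fin.elim0, fun j => j.elim0, by simp [ha, chi_bot], fun h => absurd ha h⟩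
    · obtain ⟨z, hcov, -⟩ := exists_cover_below' P _ a (hatBot d) le_rfl
        ⟨hatLE_bot P a, fun h => ha h.symm⟩
      have hss : {w : HatP d | hatLT P w z} ⊂ {w : HatP d | hatLT P w a} := by
        constructor
        · intro v hv
          exact hatLT_trans P hv hcov.1
        · intro hsub
          exact hatLT_irrefl P (hsub hcov.1)
      have hlt' := Set.ncard_lt_ncard hss (Set.toFinite _)
      obtain ⟨k, g, hg, hsum, -⟩ := ih z (by omega)
      refine ⟨k + 1, Fin.cons (rho z a) g, ?_, ?_, fun _ => Nat.succ_pos k⟩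
      · intro j
        refine Fin.cases ?_ ?_ j
        · rw [Fin.cons_zero]
          exact ⟨z, a, hcov, rfl⟩
        · intro i
          rw [Fin.cons_succ]
          exact hg i
      · rw [Fin.sum_cons, hsum]
        show chi z - chi a + -chi z = -chi a
        abel

end Helpers
section Helpers2

variable {d : ℕ} (P : PartialOrder (Fin d))

lemma count_lemma {k : ℕ} {b : ℝ} (hb : b ≠ 0) (p : Fin k → Prop)
    (h : ∑ j : Fin k, (if p j then (-1 : ℝ) else 1) * b = 0) :
    Nat.card {j : Fin k // p j} = Nat.card {j : Fin k // ¬ p j} := by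
  classical
  rw [← Finset.sum_mul] at h
  have hs : ∑ j : Fin k, (if p j then (-1 : ℝ) else 1) = 0 :=
    (mul_eq_zero.1 h).resolve_right hb
  rw [Finset.sum_ite, Finset.sum_const, Finset.sum_const] at hs
  have h2 : ((Finset.univ.filter p).card : ℝ)
      = ((Finset.univ.filter (fun j => ¬ p j)).card : ℝ) := by
    simp only [nsmul_eq_mul] at hs
    linarith
  have h3 : (Finset.univ.filter p).card = (Finset.univ.filter (fun j => ¬ p j)).card := by
    exact_mod_cast h2
  rw [Nat.card_eq_fintype_card, Nat.card_eq_fintype_card, Fintype.card_subtype,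
    Fintype.card_subtype]
  exact h3

lemma fin_telescope {M : Type*} [AddCommGroup M] : ∀ {r : ℕ} (f : Fin (r + 1) → M),
    ∑ j : Fin r, (f j.succ - f j.castSucc) = f (Fin.last r) - f 0
  | 0, f => by simp
  | (n + 1), f => by
    rw [Fin.sum_univ_castSucc]
    have ih := fin_telescope (fun j : Fin (n + 1) => f j.castSucc)
    simp only [Fin.succ_castSucc] at ih ⊢
    rw [ih, Fin.succ_last]
    have h0 : Fin.castSucc (0 : Fin (n + 1)) = (0 : Fin (n + 2)) := rfl
    rw [h0]
    abel

lemma steps_special {k : ℕ} {b : ℝ} (hb : b ≠ 0) (l : (Fin d → ℝ) →L[ℝ] ℝ)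
    (x y : Fin k → HatP d)
    (hedge : ∀ j, hatLT P (x j) (y j) ∨ hatLT P (y j) (x j))
    (hval : ∀ j, l (rhoE P (x j) (y j)) = b)
    (htel : ∑ j, (chi (y j) - chi (x j)) = 0) :
    Nat.card {j : Fin k // hatLT P (x j) (y j)} = Nat.card {j : Fin k // hatLT P (y j) (x j)} := by
  have hterm : ∀ j, (if hatLT P (x j) (y j) then (-1 : ℝ) else 1) • rhoE P (x j) (y j)
      = chi (y j) - chi (x j) := by
    intro j
    by_cases hj : hatLT P (x j) (y j)
    · rw [if_pos hj, rhoE, if_pos hj]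
      show (-1 : ℝ) • (chi (x j) - chi (y j)) = _
      rw [neg_one_smul, neg_sub]
    · rw [if_neg hj, rhoE, if_neg hj, one_smul]
      rfl
  have hsum0 : ∑ j, (if hatLT P (x j) (y j) then (-1 : ℝ) else 1) • rhoE P (x j) (y j) = 0 := by
    rw [Finset.sum_congr rfl (fun j _ => hterm j)]
    exact htel
  have hl0 := congrArg l hsum0
  rw [map_sum, map_zero] at hl0
  simp only [map_smul, smul_eq_mul, hval] at hl0
  have hcount := count_lemma hb _ hl0
  rw [hcount]
  exact Nat.card_congr (Equiv.subtypeEquivRight fun j =>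
    ⟨fun hn => (hedge j).resolve_left hn, fun hd ha => hatLT_asymm P ha hd⟩)

end Helpers2
/-- if a cycle `C` in `P̂` belongs to a facet of `Q_P`, then either `C` is a
very special cycle, or (after relabeling the cyclic starting point) `C` contains a special
path from `y₀ = 0̂` to `y_{d+1} = 1̂`. -/
theorem stmt7 (d : ℕ) (hd : 1 ≤ d) (P : PartialOrder (Fin d)) (m : ℕ)
    (c : Fin (m + 1) → HatP d) (hc : IsCycle P c)
    (hfacet : ∃ F : Set (Fin d → ℝ), IsFacet (QPoly P) F ∧
      ∀ j, rhoE P (c j) (c (j + 1)) ∈ F) :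
    VerySpecialCycle P c ∨
      ∃ (s : Fin (m + 1)) (r : ℕ) (hr : r + 1 ≤ m + 1) (q : Fin (r + 1) → HatP d),
        (∀ j, q j = c (s + Fin.castLE hr j)) ∧
        q 0 = hatBot d ∧ q (Fin.last r) = hatTop d ∧
        IsPath P q ∧ PathSpecial P q := by
  classical
  obtain ⟨F, ⟨hexp, hrank⟩, hmemF⟩ := hfacet
  obtain ⟨l, hF⟩ := hexp ⟨_, hmemF 0⟩
  have hmemQ : ∀ j, rhoE P (c j) (c (j + 1)) ∈ QPoly P ∧
      ∀ y ∈ QPoly P, l y ≤ l (rhoE P (c j) (c (j + 1))) := by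
    intro j
    have := hmemF j
    rw [hF] at this
    exact this
  set b := l (rhoE P (c 0) (c (0 + 1))) with hbdef
  have hub : ∀ y ∈ QPoly P, l y ≤ b := (hmemQ 0).2
  have hval : ∀ j, l (rhoE P (c j) (c (j + 1))) = b := fun j =>
    le_antisymm (hub _ (hmemQ j).1) ((hmemQ j).2 _ (hmemQ 0).1)
  have hedges_sub : edgeVecs P ⊆ QPoly P := subset_convexHull ℝ _
  have hb : b ≠ 0 := by
    intro h0
    have hchi : ∀ x : HatP d, l (chi x) = 0 := by
      intro x
      obtain ⟨k, g, hg, hsum, -⟩ := up_sum P _ x le_rfl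
      obtain ⟨k', g', hg', hsum', -⟩ := down_sum P _ x le_rfl
      have h1 : l (chi x) ≤ 0 := by
        rw [← hsum, map_sum]
        exact Finset.sum_nonpos fun j _ => h0 ▸ hub _ (hedges_sub (hg j))
      have h2 : l (-(chi x)) ≤ 0 := by
        rw [← hsum', map_sum]
        exact Finset.sum_nonpos fun j _ => h0 ▸ hub _ (hedges_sub (hg' j))
      rw [map_neg] at h2
      linarith
    have hQ0 : ∀ y ∈ QPoly P, l y = 0 := by
      intro y hy
      have hconv : Convex ℝ {v : Fin d → ℝ | l v = 0} := by
        intro u hu v hv a b' ha hb' hab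
        simp only [Set.mem_setOf_eq] at hu hv ⊢
        rw [map_add, map_smul, map_smul, hu, hv, smul_zero, smul_zero, add_zero]
      refine convexHull_min ?_ hconv hy
      rintro v ⟨a, bb, hcov, rfl⟩
      show l (chi a - chi bb) = 0
      rw [map_sub, hchi, hchi, sub_zero]
    have hFQ : F = QPoly P := by
      rw [hF]
      ext x
      simp only [Set.mem_setOf_eq]
      exact ⟨fun h => h.1, fun hx => ⟨hx, fun y hy => by rw [hQ0 y hy, hQ0 x hx]⟩⟩
    have h0Q : (0 : Fin d → ℝ) ∈ QPoly P := by
      obtain ⟨k, g, hg, hsum, hk⟩ := up_sum P _ (hatBot d) le_rfl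
      have hkpos : 0 < k := hk (by simp [hatBot, hatTop])
      have hz : (0 : Fin d → ℝ) = ∑ j : Fin k, ((k : ℝ)⁻¹) • g j := by
        rw [← Finset.smul_sum, hsum, chi_bot, smul_zero]
      rw [hz]
      refine (convex_convexHull ℝ _).sum_mem (fun j _ => by positivity)
        ?_ (fun j _ => hedges_sub (hg j))
      rw [Finset.sum_const, Finset.card_univ, Fintype.card_fin, nsmul_eq_mul]
      have : (k : ℝ) ≠ 0 := Nat.cast_ne_zero.2 (by omega)
      field_simp
    have hspan : vectorSpan ℝ F = ⊤ := by
      rw [hFQ, eq_top_iff, ← (Pi.basisFun ℝ (Fin d)).span_eq, Submodule.span_le]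
      rintro v ⟨i, rfl⟩
      have hib : (Pi.basisFun ℝ (Fin d)) i = chi (some (some i) : HatP d) := by
        ext kk
        simp [chi, Pi.basisFun_apply, Pi.single_apply]
      rw [hib]
      obtain ⟨k, g, hg, hsum, -⟩ := up_sum P _ (some (some i) : HatP d) le_rfl
      rw [← hsum]
      refine Submodule.sum_mem _ fun j _ => ?_
      have := vsub_mem_vectorSpan ℝ (hedges_sub (hg j)) h0Q
      simpa using this
    rw [hspan, finrank_top, Module.finrank_fin_fun] at hrank
    omega
  have hcs : CycleSpecial P c := by
    refine steps_special P hb l c (fun j => c (j + 1))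
      (fun j => edge_dichotomy P (hc.2.2 j)) hval ?_
    rw [Finset.sum_sub_distrib]
    rw [Fintype.sum_equiv (Equiv.addRight (1 : Fin (m + 1)))
      (fun j => chi (c (j + 1))) (fun j => chi (c j)) (fun j => rfl)]
    exact sub_self _
  by_cases hrange : hatBot d ∈ Set.range c ∧ hatTop d ∈ Set.range c
  · right
    obtain ⟨⟨s, hs⟩, ⟨t, ht⟩⟩ := hrange
    have hm : 2 ≤ m := hc.1
    have hr : (t - s).val + 1 ≤ m + 1 := (t - s).isLt
    have hidx : ∀ j : Fin (t - s).val,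
        s + Fin.castLE hr j.succ = s + Fin.castLE hr j.castSucc + 1 := by
      intro j
      apply Fin.ext
      have h1 : (1 : Fin (m + 1)).val = 1 := by
        rw [Fin.val_one']
        exact Nat.mod_eq_of_lt (by omega)
      simp only [Fin.val_add, Fin.coe_castLE, Fin.val_succ, Fin.coe_castSucc, h1,
        Nat.mod_add_mod]
      rw [← Nat.add_assoc]
    have hq0 : c (s + Fin.castLE hr (0 : Fin ((t - s).val + 1))) = hatBot d := by
      have h0 : Fin.castLE hr (0 : Fin ((t - s).val + 1)) = (0 : Fin (m + 1)) :=
        Fin.ext (by simp)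
      rw [h0, add_zero, hs]
    have hqlast : c (s + Fin.castLE hr (Fin.last (t - s).val)) = hatTop d := by
      have h1 : Fin.castLE hr (Fin.last (t - s).val) = t - s := Fin.ext (by simp)
      rw [h1, show s + (t - s) = t from add_sub_cancel s t, ht]
    refine ⟨s, (t - s).val, hr, fun j => c (s + Fin.castLE hr j), fun j => rfl,
      hq0, hqlast, ⟨?_, ?_⟩, ?_⟩
    · intro j1 j2 hj
      have h2 := hc.2.1 hj
      have h3 := add_left_cancel h2
      exact Fin.castLE_injective hr h3
    · intro j
      show IsEdge P (c (s + Fin.castLE hr j.castSucc)) (c (s + Fin.castLE hr j.succ))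
      rw [hidx j]
      exact hc.2.2 _
    · refine steps_special P hb l (fun j => c (s + Fin.castLE hr j.castSucc))
        (fun j => c (s + Fin.castLE hr j.succ)) ?_ ?_ ?_
      · intro j
        show hatLT P (c (s + Fin.castLE hr j.castSucc)) (c (s + Fin.castLE hr j.succ)) ∨
          hatLT P (c (s + Fin.castLE hr j.succ)) (c (s + Fin.castLE hr j.castSucc))
        rw [hidx j]
        exact edge_dichotomy P (hc.2.2 _)
      · intro j
        show l (rhoE P (c (s + Fin.castLE hr j.castSucc)) (c (s + Fin.castLE hr j.succ))) = b
        rw [hidx j]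
        exact hval _
      · exact (fin_telescope (fun j : Fin ((t - s).val + 1) =>
          chi (c (s + Fin.castLE hr j)))).trans
          (by rw [hqlast, hq0, chi_top, chi_bot, sub_self])
  · left
    exact ⟨hc, hcs, hrange⟩
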